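/- arXiv:1706.06189 — 2 statements merged into one kernel-verified Lean document; each statement's English description precedes it below -/
import Mathlib

section
/- Let g(t) = (1/2)t² cos(2θ₀) + (1/4)log(1 + t⁴ - 2t² cos(2θ₀)). If π/8 ≤ |θ₀| ≤ π/4, then g'(t) > 0 for all t > 0; in particular g is strictly increasing on [0, ∞). -/
/-!
Write `c = cos 2θ₀`. The quartic `1 + t⁴ - 2t²c` exceeds `(t² - 1)²` as soon as `c < 1`, so it never
vanishes and `g` is smooth. The hypotheses on `|θ₀|` say exactly that `0 ≤ c ≤ √2 / 2`, so `1 - 2c² ≥ 0`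
and the numerator `t³ (t²c + 1 - 2c²)` of `g'` is positive for `t > 0`: either `c = 0` and it is `t³`,
or `t²c > 0`.
-/

open Real

lemma cos_two_mul_nonneg_of_abs_le_pi_div_four {θ : ℝ} (h : |θ| ≤ π / 4) : 0 ≤ cos (2 * θ) := by
  rw [← cos_abs, abs_mul, abs_two]
  apply cos_nonneg_of_mem_Icc
  constructor <;> linarith [abs_nonneg θ, pi_pos]

lemma cos_two_mul_le_of_pi_div_eight_le_abs {θ : ℝ} (h1 : π / 8 ≤ |θ|) (h2 : |θ| ≤ π / 2) :
    cos (2 * θ) ≤ √2 / 2 := by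
  rw [← cos_abs, abs_mul, abs_two, ← cos_pi_div_four]
  apply cos_le_cos_of_nonneg_of_le_pi <;> linarith [pi_pos]

lemma one_add_pow_four_sub_two_mul_sq_mul_pos {c : ℝ} (hc : c < 1) (t : ℝ) :
    0 < 1 + t ^ 4 - 2 * t ^ 2 * c := by
  nlinarith [sq_nonneg (t ^ 2 - 1), sq_nonneg t, mul_nonneg (sq_nonneg t) (sub_nonneg.2 hc.le)]

lemma pow_three_mul_sq_mul_add_one_sub_two_mul_sq_pos {c t : ℝ} (hc0 : 0 ≤ c)
    (hc2 : c ^ 2 ≤ 1 / 2) (ht : 0 < t) : 0 < t ^ 3 * (t ^ 2 * c + 1 - 2 * c ^ 2) := by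
  refine mul_pos (by positivity) ?_
  rcases hc0.eq_or_lt with rfl | hc
  · norm_num
  · nlinarith [mul_pos (pow_pos ht 2) hc]

lemma hasDerivAt_sq_div_two_mul_add_log_div_four (c t : ℝ) (h : 1 + t ^ 4 - 2 * t ^ 2 * c ≠ 0) :
    HasDerivAt (fun t => t ^ 2 / 2 * c + log (1 + t ^ 4 - 2 * t ^ 2 * c) / 4)
      (t ^ 3 * (t ^ 2 * c + 1 - 2 * c ^ 2) / (1 + t ^ 4 - 2 * t ^ 2 * c)) t := by
  have hquartic : HasDerivAt (fun t => 1 + t ^ 4 - 2 * t ^ 2 * c) (4 * t ^ 3 - 4 * t * c) t := by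
    refine (((hasDerivAt_pow 4 t).const_add 1).sub
      (((hasDerivAt_pow 2 t).const_mul 2).mul_const c)).congr_deriv ?_
    push_cast
    ring
  refine ((((hasDerivAt_pow 2 t).div_const 2).mul_const c).add
    ((hquartic.log h).div_const 4)).congr_deriv ?_
  push_cast
  field_simp
  ring

theorem stmt_2 (θ₀ : ℝ) (h1 : Real.pi / 8 ≤ |θ₀|) (h2 : |θ₀| ≤ Real.pi / 4)
    (g : ℝ → ℝ)
    (hg : g = fun t => t ^ 2 / 2 * Real.cos (2 * θ₀)
      + Real.log (1 + t ^ 4 - 2 * t ^ 2 * Real.cos (2 * θ₀)) / 4) :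
    (∀ t : ℝ, 0 < t →
      HasDerivAt g
        (t ^ 3 * (t ^ 2 * Real.cos (2 * θ₀) + 1 - 2 * Real.cos (2 * θ₀) ^ 2)
          / (1 + t ^ 4 - 2 * t ^ 2 * Real.cos (2 * θ₀))) t ∧
      0 < t ^ 3 * (t ^ 2 * Real.cos (2 * θ₀) + 1 - 2 * Real.cos (2 * θ₀) ^ 2)
          / (1 + t ^ 4 - 2 * t ^ 2 * Real.cos (2 * θ₀))) ∧
    StrictMonoOn g (Set.Ici 0) := by
  set c := cos (2 * θ₀)
  have hc0 : 0 ≤ c := cos_two_mul_nonneg_of_abs_le_pi_div_four h2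
  have hc_le : c ≤ √2 / 2 := cos_two_mul_le_of_pi_div_eight_le_abs h1 (by linarith [pi_pos])
  have hc2 : c ^ 2 ≤ 1 / 2 := by
    nlinarith [sq_sqrt (zero_le_two : (0 : ℝ) ≤ 2)]
  have hc1 : c < 1 := by nlinarith
  have hquartic_pos := one_add_pow_four_sub_two_mul_sq_mul_pos hc1
  have hderiv (t : ℝ) := hg ▸ hasDerivAt_sq_div_two_mul_add_log_div_four c t (hquartic_pos t).ne'
  have hderiv_pos {t : ℝ} (ht : 0 < t) :=
    div_pos (pow_three_mul_sq_mul_add_one_sub_two_mul_sq_pos hc0 hc2 ht) (hquartic_pos t)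
  refine ⟨fun t ht => ⟨hderiv t, hderiv_pos ht⟩, ?_⟩
  refine strictMonoOn_of_hasDerivWithinAt_pos (convex_Ici 0)
    (fun t _ => (hderiv t).continuousAt.continuousWithinAt)
    (fun t _ => (hderiv t).hasDerivWithinAt) ?_
  rw [interior_Ici]
  exact fun t ht => hderiv_pos ht
end

section
/- Let M be a positive integer and let g and x be related by x g = e^{iφ} sin((2M+2)φ)/sin((2M+1)φ) and x² = (sin((2M+2)φ))^{2M+2} / (sin φ · (sin((2M+1)φ))^{2M+1}), for 0 < φ < π/(2M+2). Then (x^{2M-1} g^{2M+1} - 1)² x g + x^{2M-1} g^{2M+1} - 1 = 0; equivalently, w = xg satisfies (w^{2M+1}/x² - 1)² w + w^{2M+1}/x² - 1 = 0. -/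
theorem stmt_17 (M : ℕ) (hM : 1 ≤ M) (φ : ℝ)
    (hφ0 : 0 < φ) (hφ1 : φ < Real.pi / (2 * M + 2))
    (x : ℝ) (hx : 0 < x)
    (hx2 : x ^ 2 = Real.sin ((2 * (M : ℝ) + 2) * φ) ^ (2 * M + 2)
      / (Real.sin φ * Real.sin ((2 * (M : ℝ) + 1) * φ) ^ (2 * M + 1)))
    (w : ℂ)
    (hw : w = Complex.exp ((φ : ℂ) * Complex.I)
      * ((Real.sin ((2 * (M : ℝ) + 2) * φ) / Real.sin ((2 * (M : ℝ) + 1) * φ) : ℝ) : ℂ)) :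
    (w ^ (2 * M + 1) / (x : ℂ) ^ 2 - 1) ^ 2 * w + (w ^ (2 * M + 1) / (x : ℂ) ^ 2 - 1) = 0 := by
  have hMpos : (0:ℝ) ≤ (M:ℝ) := Nat.cast_nonneg M
  have h2M2pos : (0:ℝ) < 2*(M:ℝ)+2 := by positivity
  have hcπ : (2*(M:ℝ)+2)*φ < Real.pi := by
    have h := (lt_div_iff₀' h2M2pos).mp hφ1
    linarith
  have hs0 : 0 < Real.sin φ :=
    Real.sin_pos_of_pos_of_lt_pi hφ0 (by nlinarith)
  have hs1 : 0 < Real.sin ((2*(M:ℝ)+1)*φ) :=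
    Real.sin_pos_of_pos_of_lt_pi (by nlinarith) (by nlinarith)
  have hs2 : 0 < Real.sin ((2*(M:ℝ)+2)*φ) :=
    Real.sin_pos_of_pos_of_lt_pi (by nlinarith) hcπ
  set s0 := Real.sin φ with hs0def
  set s1 := Real.sin ((2*(M:ℝ)+1)*φ) with hs1def
  set s2 := Real.sin ((2*(M:ℝ)+2)*φ) with hs2def
  have hr1 : Real.cos ((2*(M:ℝ)+2)*φ) * s0 = Real.cos φ * s2 - s1 := by
    have he : (2*(M:ℝ)+1)*φ = (2*(M:ℝ)+2)*φ - φ := by ring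
    rw [hs1def, he, Real.sin_sub]
    ring
  set A := Complex.exp ((φ:ℂ) * Complex.I) with hA
  have hA2 : A ^ (2*M+2) = ((Real.cos ((2*(M:ℝ)+2)*φ) : ℝ):ℂ) + (s2:ℂ) * Complex.I := by
    rw [hA, ← Complex.exp_nat_mul]
    have he : ((2*M+2 : ℕ) : ℂ) * ((φ:ℂ) * Complex.I)
        = (((2*(M:ℝ)+2)*φ : ℝ):ℂ) * Complex.I := by push_cast; ring
    rw [he, Complex.exp_mul_I, ← Complex.ofReal_cos, ← Complex.ofReal_sin, ← hs2def]
  have hA1 : A = ((Real.cos φ : ℝ):ℂ) + (s0:ℂ) * Complex.I := by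
    rw [hA, Complex.exp_mul_I, ← Complex.ofReal_cos, ← Complex.ofReal_sin, ← hs0def]
  have hr1C : ((Real.cos ((2*(M:ℝ)+2)*φ) : ℝ):ℂ) * (s0:ℂ)
      = ((Real.cos φ : ℝ):ℂ) * (s2:ℂ) - (s1:ℂ) := by
    exact_mod_cast congrArg Complex.ofReal hr1
  have hC : A ^ (2*M+2) * (s0:ℂ) = A * (s2:ℂ) - (s1:ℂ) := by
    rw [hA2, hA1]
    linear_combination hr1C
  have hs1C : ((s1:ℝ):ℂ) ≠ 0 := by exact_mod_cast hs1.ne'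
  have hs0C : ((s0:ℝ):ℂ) ≠ 0 := by exact_mod_cast hs0.ne'
  have hs2C : ((s2:ℝ):ℂ) ≠ 0 := by exact_mod_cast hs2.ne'
  have hxC : ((x:ℝ):ℂ) ≠ 0 := by exact_mod_cast hx.ne'
  have hx2C : ((x:ℝ):ℂ)^2 = (s2:ℂ)^(2*M+2) / ((s0:ℂ) * (s1:ℂ)^(2*M+1)) := by
    push_cast [← hx2]
    norm_cast
  have hwpow : w ^ (2*M+2) = A ^ (2*M+2) * (s2:ℂ)^(2*M+2) / (s1:ℂ)^(2*M+2) := by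
    rw [hw]
    push_cast
    rw [mul_pow, div_pow]
    ring
  have hAs2 : A * (s2:ℂ) = A ^ (2*M+2) * (s0:ℂ) + (s1:ℂ) := by
    linear_combination -hC
  have hkey : w ^ (2*M+2) = (x:ℂ)^2 * (w - 1) := by
    rw [hwpow, hx2C, hw]
    push_cast
    rw [mul_div_assoc', hAs2]
    field_simp
    ring
  have huw : (w ^ (2 * M + 1) / (x : ℂ) ^ 2 - 1) * w = -1 := by
    have hxsq : ((x:ℝ):ℂ)^2 ≠ 0 := pow_ne_zero 2 hxC
    field_simp
    linear_combination hkey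
  calc (w ^ (2 * M + 1) / (x : ℂ) ^ 2 - 1) ^ 2 * w + (w ^ (2 * M + 1) / (x : ℂ) ^ 2 - 1)
      = (w ^ (2 * M + 1) / (x : ℂ) ^ 2 - 1) * ((w ^ (2 * M + 1) / (x : ℂ) ^ 2 - 1) * w)
        + (w ^ (2 * M + 1) / (x : ℂ) ^ 2 - 1) := by ring
    _ = 0 := by rw [huw]; ring
end
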